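/- arXiv:1107.0540 — 3 statements merged into one kernel-verified Lean document; each statement's English description precedes it below -/
import Mathlib

section
/- For a random variable Z with E|Z| < ∞ and p ∈ (0,1), the function g(θ) = E[|p − 1_{Z ≤ θ}|(Z − θ)] is strictly decreasing on the set I = {x ∈ ℝ : 0 < F_Z(x) < 1}, where F_Z is the cumulative distribution function of Z; hence the equation g(θ) = 0 has at most one solution on I. -/
/-!
For fixed z, θ ↦ |p - 1_{z ≤ θ}| (z - θ) is continuous and piecewise linear with slopes -p
(for θ < z) and -(1 - p) (for θ ≥ z), so it decreases by at least min p (1 - p) · (θ₂ - θ₁)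
between θ₁ < θ₂. Integrating this bound against a finite nonzero measure shows that g is strictly
decreasing on all of ℝ, in particular on I, and a strictly monotone function is injective.
-/

open MeasureTheory

/-- The integrand of the expectile estimating equation `E[expectileScore p θ Z] = 0`. -/
noncomputable def expectileScore (p θ z : ℝ) : ℝ :=
  |p - if z ≤ θ then 1 else 0| * (z - θ)

lemma abs_sub_indicator_le_one {p : ℝ} (hp : p ∈ Set.Icc (0 : ℝ) 1) (P : Prop) [Decidable P] :
    |p - if P then 1 else 0| ≤ 1 := by
  obtain ⟨hp0, hp1⟩ := hp
  rw [abs_le]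
  split_ifs <;> constructor <;> linarith

lemma integrable_expectileScore {Ω : Type*} [MeasurableSpace Ω] {μ : Measure Ω}
    {Z : Ω → ℝ} (hZ : Integrable Z μ) [IsFiniteMeasure μ] {p : ℝ} (hp : p ∈ Set.Icc (0 : ℝ) 1)
    (θ : ℝ) : Integrable (fun ω => expectileScore p θ (Z ω)) μ := by
  have hweight : AEStronglyMeasurable (fun ω => |p - if Z ω ≤ θ then (1 : ℝ) else 0|) μ :=
    ((measurable_const.sub (Measurable.ite measurableSet_Iic measurable_const
      measurable_const)).abs.comp_aemeasurable hZ.aemeasurable).aestronglyMeasurable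
  exact (hZ.sub (integrable_const θ)).bdd_mul hweight
    (ae_of_all _ fun ω => by simpa using abs_sub_indicator_le_one hp (Z ω ≤ θ))

lemma expectileScore_add_le {p θ₁ θ₂ : ℝ} (hp : p ∈ Set.Icc (0 : ℝ) 1) (h : θ₁ ≤ θ₂) (z : ℝ) :
    expectileScore p θ₂ z + min p (1 - p) * (θ₂ - θ₁) ≤ expectileScore p θ₁ z := by
  obtain ⟨hp0, hp1⟩ := hp
  have hmin₁ := min_le_left p (1 - p)
  have hmin₂ := min_le_right p (1 - p)
  unfold expectileScore
  rcases le_or_gt z θ₁ with h₁ | h₁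
  · rw [if_pos h₁, if_pos (h₁.trans h), abs_of_nonpos (by linarith : p - 1 ≤ 0)]
    nlinarith
  rw [if_neg h₁.not_ge, sub_zero, abs_of_nonneg hp0]
  rcases le_or_gt z θ₂ with h₂ | h₂
  · rw [if_pos h₂, abs_of_nonpos (by linarith : p - 1 ≤ 0)]
    nlinarith
  · rw [if_neg h₂.not_ge, sub_zero, abs_of_nonneg hp0]
    nlinarith

theorem strictAnti_integral_expectileScore {Ω : Type*} [MeasurableSpace Ω] {μ : Measure Ω}
    [IsFiniteMeasure μ] [NeZero μ] {Z : Ω → ℝ} (hZ : Integrable Z μ) {p : ℝ}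
    (hp : p ∈ Set.Ioo (0 : ℝ) 1) :
    StrictAnti fun θ => ∫ ω, expectileScore p θ (Z ω) ∂μ := by
  intro θ₁ θ₂ h
  have hp' := Set.Ioo_subset_Icc_self hp
  set c := min p (1 - p) * (θ₂ - θ₁)
  have hc : 0 < c := mul_pos (lt_min hp.1 (by linarith [hp.2])) (by linarith)
  calc ∫ ω, expectileScore p θ₂ (Z ω) ∂μ
      < ∫ ω, expectileScore p θ₂ (Z ω) ∂μ + μ.real Set.univ * c := by
        linarith [mul_pos (measureReal_univ_pos (μ := μ)) hc]
    _ = ∫ ω, expectileScore p θ₂ (Z ω) + c ∂μ := by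
        rw [integral_add (integrable_expectileScore hZ hp' θ₂) (integrable_const c),
          integral_const, smul_eq_mul]
    _ ≤ ∫ ω, expectileScore p θ₁ (Z ω) ∂μ :=
        integral_mono ((integrable_expectileScore hZ hp' θ₂).add (integrable_const c))
          (integrable_expectileScore hZ hp' θ₁) fun ω => expectileScore_add_le hp' h.le (Z ω)

/-- The population estimating function g(θ) = E[|p − 1_{Z≤θ}|(Z−θ)] is strictly
decreasing on I = {x : 0 < F_Z(x) < 1}; hence g(θ) = 0 has at most one solution
on I. -/
theorem estimating_function_strictAntiOn
    {Ω : Type*} [MeasurableSpace Ω] (μ : Measure Ω) [IsProbabilityMeasure μ]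
    (Z : Ω → ℝ) (hZ : Integrable Z μ) (p : ℝ) (hp : p ∈ Set.Ioo (0:ℝ) 1) :
    StrictAntiOn
        (fun θ : ℝ => ∫ ω, |p - (if Z ω ≤ θ then (1:ℝ) else 0)| * (Z ω - θ) ∂μ)
        {x : ℝ | 0 < (μ {ω | Z ω ≤ x}).toReal ∧ (μ {ω | Z ω ≤ x}).toReal < 1} ∧
      ∀ θ₁ ∈ {x : ℝ | 0 < (μ {ω | Z ω ≤ x}).toReal ∧ (μ {ω | Z ω ≤ x}).toReal < 1},
        ∀ θ₂ ∈ {x : ℝ | 0 < (μ {ω | Z ω ≤ x}).toReal ∧ (μ {ω | Z ω ≤ x}).toReal < 1},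
          (∫ ω, |p - (if Z ω ≤ θ₁ then (1:ℝ) else 0)| * (Z ω - θ₁) ∂μ) = 0 →
          (∫ ω, |p - (if Z ω ≤ θ₂ then (1:ℝ) else 0)| * (Z ω - θ₂) ∂μ) = 0 →
          θ₁ = θ₂ := by
  have hanti := (strictAnti_integral_expectileScore hZ hp).strictAntiOn
    {x : ℝ | 0 < (μ {ω | Z ω ≤ x}).toReal ∧ (μ {ω | Z ω ≤ x}).toReal < 1}
  exact ⟨hanti, fun θ₁ h₁ θ₂ h₂ hg₁ hg₂ => hanti.injOn h₁ h₂ (hg₁.trans hg₂.symm)⟩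
end

section
/- Let Y be a standard Gaussian random variable, p ∈ (0,1), θ > 0, and h(x) = x² (or more generally h(x) = |x|^β with β > 0). Then the function ψ̃(t) = |p − 1_{h(t) ≤ θ}|(h(t) − θ) − E[|p − 1_{h(Y) ≤ θ}|(h(Y) − θ)] has Hermite rank 2, i.e., E[ψ̃(Y)] = 0, E[ψ̃(Y)·Y] = 0, and E[ψ̃(Y)·(Y² − 1)] ≠ 0. -/
/-!
For 0 < p < 1 the map u ↦ |p − 1_{u ≤ θ}|(u − θ) is strictly increasing, so ψ̃(t) = G(|t|) with
G strictly increasing on [0, ∞). As E[Y² − 1] = 0, E[ψ̃(Y)(Y² − 1)] = E[(G(|Y|) − G(1))(Y² − 1)],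
and this integrand is positive wherever |Y| ≠ 1. The first-order coefficient vanishes because ψ̃ is
even and N(0, 1) is symmetric.
-/

open MeasureTheory ProbabilityTheory Set
open scoped ENNReal NNReal

instance isNegInvariant_gaussianReal_zero (v : ℝ≥0) : (gaussianReal 0 v).IsNegInvariant :=
  ⟨by rw [Measure.neg_def, gaussianReal_map_neg, neg_zero]⟩

lemma integral_mul_id_eq_zero_of_even {μ : Measure ℝ} [μ.IsNegInvariant] {f : ℝ → ℝ}
    (hf : ∀ x, f (-x) = f x) : ∫ x, f x * x ∂μ = 0 := by
  have h := integral_neg_eq_self (fun x => f x * x) μ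
  simp only [hf, mul_neg, integral_neg] at h
  linarith

lemma integral_sq_gaussianReal_zero (v : ℝ≥0) : ∫ x, x ^ 2 ∂gaussianReal 0 v = v := by
  simpa [integral_id_gaussianReal] using
    (variance_eq_integral (μ := gaussianReal 0 v) measurable_id'.aemeasurable).symm.trans
      variance_fun_id_gaussianReal

lemma memLp_abs_rpow_gaussianReal (μ : ℝ) (v : ℝ≥0) {r : ℝ} (hr : 0 < r) {p : ℝ≥0∞}
    (hp : p ≠ ∞) : MemLp (fun x => |x| ^ r) p (gaussianReal μ v) := by
  have hr' : ENNReal.ofReal r ≠ 0 := by simpa using hr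
  have h := (memLp_id_gaussianReal' (μ := μ) (v := v) (p * ENNReal.ofReal r)
    (ENNReal.mul_ne_top hp ENNReal.ofReal_ne_top)).norm_rpow_div (ENNReal.ofReal r)
  rwa [ENNReal.mul_div_cancel_right hr' ENNReal.ofReal_ne_top, ENNReal.toReal_ofReal hr.le] at h

lemma integral_sq_sub_one_gaussianReal : ∫ x, (x ^ 2 - 1) ∂gaussianReal 0 1 = 0 := by
  have hsq : Integrable (fun x : ℝ => x ^ 2) (gaussianReal 0 1) :=
    (memLp_id_gaussianReal 2).integrable_sq
  rw [integral_sub hsq (integrable_const 1), integral_sq_gaussianReal_zero]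
  simp

lemma memLp_sq_sub_one_gaussianReal : MemLp (fun x : ℝ => x ^ 2 - 1) 2 (gaussianReal 0 1) := by
  refine ((memLp_abs_rpow_gaussianReal 0 1 two_pos ENNReal.ofNat_ne_top).sub
    (memLp_const 1)).ae_eq (Filter.Eventually.of_forall fun x => ?_)
  simp

lemma strictMono_abs_sub_ite_mul_sub {p : ℝ} (hp : p ∈ Ioo 0 1) (c : ℝ) :
    StrictMono fun u : ℝ => |p - if u ≤ c then 1 else 0| * (u - c) := by
  obtain ⟨hp0, hp1⟩ := hp
  intro u v huv
  by_cases hu : u ≤ c <;> by_cases hv : v ≤ c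
  · simp only [hu, hv, if_true, abs_of_neg (by linarith : p - 1 < 0)]
    nlinarith
  · simp only [hu, hv, if_true, if_false, abs_of_neg (by linarith : p - 1 < 0), sub_zero,
      abs_of_pos hp0]
    nlinarith
  · exact absurd (huv.le.trans hv) hu
  · simp only [hu, hv, if_false, sub_zero, abs_of_pos hp0]
    nlinarith

lemma abs_abs_sub_ite_mul_sub_le {p : ℝ} (hp : p ∈ Icc 0 1) (c u : ℝ) :
    |(|p - if u ≤ c then 1 else 0| * (u - c))| ≤ |u - c| := by
  rw [abs_mul, abs_abs]
  refine mul_le_of_le_one_left (abs_nonneg _) (abs_le.2 ⟨?_, ?_⟩) <;>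
    split_ifs <;> linarith [hp.1, hp.2]

lemma MeasureTheory.MemLp.abs_sub_ite_mul_sub {α : Type*} [MeasurableSpace α] {μ : Measure α}
    [IsFiniteMeasure μ] {f : α → ℝ} {q : ℝ≥0∞} (hf : MemLp f q μ) {p : ℝ} (hp : p ∈ Ioo 0 1)
    (c : ℝ) : MemLp (fun x => |p - if f x ≤ c then 1 else 0| * (f x - c)) q μ :=
  (hf.sub (memLp_const c)).of_le
    (((strictMono_abs_sub_ite_mul_sub hp c).monotone.measurable.comp_aemeasurable
      hf.1.aemeasurable).aestronglyMeasurable)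
    (Filter.Eventually.of_forall fun _ => abs_abs_sub_ite_mul_sub_le (Ioo_subset_Icc_self hp) _ _)

theorem integral_comp_abs_mul_sq_sub_one_pos {G : ℝ → ℝ} (hG : StrictMonoOn G (Ici 0))
    (hGL : MemLp (fun x => G |x|) 2 (gaussianReal 0 1)) :
    0 < ∫ x, G |x| * (x ^ 2 - 1) ∂gaussianReal 0 1 := by
  have hint : Integrable (fun x => G |x| * (x ^ 2 - 1)) (gaussianReal 0 1) :=
    hGL.integrable_mul memLp_sq_sub_one_gaussianReal
  have hint₁ : Integrable (fun x : ℝ => G 1 * (x ^ 2 - 1)) (gaussianReal 0 1) :=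
    (memLp_sq_sub_one_gaussianReal.integrable one_le_two).const_mul _
  have hpos : ∀ x : ℝ, |x| ≠ 1 → 0 < (G |x| - G 1) * (x ^ 2 - 1) := by
    intro x hx
    rw [← sq_abs]
    rcases hx.lt_or_gt with hx | hx
    · exact mul_pos_of_neg_of_neg (sub_neg.2 (hG (abs_nonneg x) (mem_Ici.2 zero_le_one) hx))
        (by nlinarith [abs_nonneg x])
    · exact mul_pos (sub_pos.2 (hG (mem_Ici.2 zero_le_one) (abs_nonneg x) hx)) (by nlinarith)
  have hnonneg : 0 ≤ fun x : ℝ => (G |x| - G 1) * (x ^ 2 - 1) := by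
    intro x
    rcases eq_or_ne |x| 1 with hx | hx
    · simp [← sq_abs x, hx]
    · exact (hpos x hx).le
  have hsupp : Ioi 1 ⊆ Function.support fun x : ℝ => (G |x| - G 1) * (x ^ 2 - 1) :=
    fun x (hx : 1 < x) => (hpos x (by rw [abs_of_pos (zero_lt_one.trans hx)]; exact hx.ne')).ne'
  have hIoi : gaussianReal 0 1 (Ioi 1) ≠ 0 := fun h => by
    simpa using gaussianReal_absolutelyContinuous' 0 one_ne_zero h
  calc 0 < ∫ x, (G |x| - G 1) * (x ^ 2 - 1) ∂gaussianReal 0 1 :=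
        (integral_pos_iff_support_of_nonneg hnonneg
          ((hint.sub hint₁).congr (ae_of_all _ fun x => (sub_mul _ _ _).symm))).2
          (pos_iff_ne_zero.2 fun h => hIoi (measure_mono_null hsupp h))
    _ = ∫ x, G |x| * (x ^ 2 - 1) ∂gaussianReal 0 1 := by
        simp only [sub_mul]
        rw [integral_sub hint hint₁, integral_const_mul, integral_sq_sub_one_gaussianReal,
          mul_zero, sub_zero]

theorem psi_tilde_hermite_rank_two_general
    (β : ℝ) (hβ : 0 < β) (p θ : ℝ) (hp : p ∈ Set.Ioo (0:ℝ) 1) :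
    let h : ℝ → ℝ := fun x => |x| ^ β
    let ψt : ℝ → ℝ := fun t =>
      |p - (if h t ≤ θ then (1:ℝ) else 0)| * (h t - θ) -
        ∫ y, |p - (if h y ≤ θ then (1:ℝ) else 0)| * (h y - θ) ∂(gaussianReal 0 1)
    (∫ y, ψt y ∂(gaussianReal 0 1)) = 0 ∧
      (∫ y, ψt y * y ∂(gaussianReal 0 1)) = 0 ∧
      (∫ y, ψt y * (y ^ 2 - 1) ∂(gaussianReal 0 1)) ≠ 0 := by
  intro h ψt
  have hψ := (memLp_abs_rpow_gaussianReal 0 1 hβ (p := 2) ENNReal.ofNat_ne_top).abs_sub_ite_mul_sub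
    hp θ
  have hmono : StrictMonoOn (fun r : ℝ => |p - if r ^ β ≤ θ then 1 else 0| * (r ^ β - θ)
      - ∫ y, |p - (if h y ≤ θ then (1:ℝ) else 0)| * (h y - θ) ∂(gaussianReal 0 1)) (Ici 0) :=
    ((strictMono_abs_sub_ite_mul_sub hp θ).comp_strictMonoOn
      (Real.strictMonoOn_rpow_Ici_of_exponent_pos hβ)).add_const _
  refine ⟨?_, integral_mul_id_eq_zero_of_even fun t => by simp only [ψt, h, abs_neg], ?_⟩
  · rw [integral_sub (hψ.integrable one_le_two) (integrable_const _)]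
    simp [h]
  · exact (integral_comp_abs_mul_sq_sub_one_pos hmono (hψ.sub (memLp_const _))).ne'

/-- For h(x) = |x|^β (β > 0, in particular h(x) = x² for β = 2), p ∈ (0,1) and θ > 0,
the centered function ψ̃(t) = |p − 1_{h(t)≤θ}|(h(t) − θ) − E[|p − 1_{h(Y)≤θ}|(h(Y) − θ)]
has Hermite rank 2: E[ψ̃(Y)] = 0, E[ψ̃(Y)Y] = 0, E[ψ̃(Y)(Y² − 1)] ≠ 0, Y ∼ N(0,1). -/
theorem psi_tilde_hermite_rank_two
    (β : ℝ) (hβ : 0 < β) (p θ : ℝ) (hp : p ∈ Set.Ioo (0:ℝ) 1) (hθ : 0 < θ) :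
    let h : ℝ → ℝ := fun x => |x| ^ β
    let ψt : ℝ → ℝ := fun t =>
      |p - (if h t ≤ θ then (1:ℝ) else 0)| * (h t - θ) -
        ∫ y, |p - (if h y ≤ θ then (1:ℝ) else 0)| * (h y - θ) ∂(gaussianReal 0 1)
    (∫ y, ψt y ∂(gaussianReal 0 1)) = 0 ∧
      (∫ y, ψt y * y ∂(gaussianReal 0 1)) = 0 ∧
      (∫ y, ψt y * (y ^ 2 - 1) ∂(gaussianReal 0 1)) ≠ 0 :=
  psi_tilde_hermite_rank_two_general β hβ p θ hp
end

section
/- Ghosh's lemma: let (V_n) and (W_n) be sequences of real random variables such that (a) for all δ > 0 there exists ε(δ) with P(|W_n| > ε(δ)) < δ for all n, and (b) for all y ∈ ℝ and ε > 0, P(V_n ≤ y, W_n ≥ y + ε) → 0 and P(V_n ≥ y + ε, W_n ≤ y) → 0 as n → ∞. Then V_n − W_n → 0 in probability. -/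
/-!
Fix `ε > 0` and `δ > 0`, and take `K` from (a), so that `|W n| ≤ K` outside a set of measure
`< δ`. A finite grid `s` of mesh `ε / 2` on `[-K - ε, K]` separates any `v` from any such `W n`
at distance more than `ε`: some `y ∈ s` has `v ≤ y`, `y + ε / 2 ≤ W n` or the reverse. Hence
`{ε < |V n - W n|}` is covered by `{K < |W n|}` and finitely many sets from (b), whose measures
tend to `0`, so `limsup μ {ε < |V n - W n|} ≤ δ` for every `δ`.
-/

open MeasureTheory Filter Set

theorem exists_finset_forall_mem_Icc_exists_mem_Icc (lo hi : ℝ) {h : ℝ} (hh : 0 < h) :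
    ∃ s : Finset ℝ, ∀ a ∈ Icc lo hi, ∃ y ∈ s, a ≤ y ∧ y ≤ a + h := by
  obtain ⟨s, hs⟩ := isCompact_Icc.elim_finite_subcover (fun y : ℝ => Ioo (y - h) y)
    (fun _ => isOpen_Ioo) fun a _ => mem_iUnion.2 ⟨a + h / 2, by constructor <;> linarith⟩
  refine ⟨s, fun a ha => ?_⟩
  obtain ⟨y, hy, hay⟩ := mem_iUnion₂.1 (hs ha)
  exact ⟨y, hy, hay.2.le, by linarith [hay.1]⟩

theorem exists_separating_mem_of_two_mul_lt_abs_sub {K h v w : ℝ} {s : Finset ℝ} (hh : 0 ≤ h)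
    (hs : ∀ a ∈ Icc (-K - 2 * h) K, ∃ y ∈ s, a ≤ y ∧ y ≤ a + h)
    (hw : |w| ≤ K) (hvw : 2 * h < |v - w|) :
    ∃ y ∈ s, (v ≤ y ∧ y + h ≤ w) ∨ (y + h ≤ v ∧ w ≤ y) := by
  obtain ⟨hKw, hwK⟩ := abs_le.1 hw
  rcases lt_abs.1 hvw with hvw | hvw
  · obtain ⟨y, hy, hwy, hyw⟩ := hs w ⟨by linarith, hwK⟩
    exact ⟨y, hy, Or.inr ⟨by linarith, hwy⟩⟩
  · obtain ⟨y, hy, hwy, hyw⟩ := hs (w - 2 * h) ⟨by linarith, by linarith⟩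
    exact ⟨y, hy, Or.inl ⟨by linarith, by linarith⟩⟩

theorem ENNReal.tendsto_atTop_zero_of_forall_le_add {u : ℕ → ENNReal}
    (h : ∀ δ : ℝ, 0 < δ → ∃ v : ℕ → ENNReal, Tendsto v atTop (nhds 0) ∧
      ∀ n, u n ≤ ENNReal.ofReal δ + v n) :
    Tendsto u atTop (nhds 0) := by
  refine ENNReal.tendsto_nhds_zero.2 fun η hη => ?_
  obtain ⟨r, -, hr0, hrη⟩ := ENNReal.lt_iff_exists_real_btwn.1 hη
  have hr : 0 < r / 2 := by simpa using hr0
  obtain ⟨v, hv, huv⟩ := h (r / 2) hr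
  filter_upwards [hv.eventually_le_const (ENNReal.ofReal_pos.2 hr)] with n hn
  calc u n ≤ ENNReal.ofReal (r / 2) + ENNReal.ofReal (r / 2) := (huv n).trans (by gcongr)
    _ = ENNReal.ofReal r := by rw [← ENNReal.ofReal_add hr.le hr.le, add_halves]
    _ ≤ η := hrη.le

section

variable {Ω ι : Type*} [MeasurableSpace Ω] {μ : Measure Ω} {l : Filter ι}

theorem tendsto_measure_union_of_tendsto_zero {A B : ι → Set Ω}
    (hA : Tendsto (fun n => μ (A n)) l (nhds 0)) (hB : Tendsto (fun n => μ (B n)) l (nhds 0)) :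
    Tendsto (fun n => μ (A n ∪ B n)) l (nhds 0) := by
  refine tendsto_of_tendsto_of_tendsto_of_le_of_le tendsto_const_nhds (by simpa using hA.add hB)
    (fun _ => zero_le) fun _ => measure_union_le _ _

theorem tendsto_measure_biUnion_finset_of_tendsto_zero {κ : Type*} {s : Finset κ}
    {A : κ → ι → Set Ω} (hA : ∀ i ∈ s, Tendsto (fun n => μ (A i n)) l (nhds 0)) :
    Tendsto (fun n => μ (⋃ i ∈ s, A i n)) l (nhds 0) := by
  refine tendsto_of_tendsto_of_tendsto_of_le_of_le tendsto_const_nhds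
    (by simpa using tendsto_finsetSum s hA) (fun _ => zero_le)
    fun _ => measure_biUnion_finset_le _ _

end

theorem ghosh_lemma_general
    {Ω : Type*} [MeasurableSpace Ω] (μ : Measure Ω)
    (V W : ℕ → Ω → ℝ)
    (ha : ∀ δ : ℝ, 0 < δ → ∃ ε : ℝ, 0 < ε ∧ ∀ n : ℕ,
        μ {ω | ε < |W n ω|} < ENNReal.ofReal δ)
    (hb : ∀ y : ℝ, ∀ ε : ℝ, 0 < ε →
        Tendsto (fun n => μ {ω | V n ω ≤ y ∧ y + ε ≤ W n ω}) atTop (nhds 0) ∧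
        Tendsto (fun n => μ {ω | y + ε ≤ V n ω ∧ W n ω ≤ y}) atTop (nhds 0)) :
    ∀ ε : ℝ, 0 < ε →
      Tendsto (fun n => μ {ω | ε < |V n ω - W n ω|}) atTop (nhds 0) := by
  intro ε hε
  set E : ℝ → ℕ → Set Ω := fun y n =>
    {ω | V n ω ≤ y ∧ y + ε / 2 ≤ W n ω} ∪ {ω | y + ε / 2 ≤ V n ω ∧ W n ω ≤ y}
  refine ENNReal.tendsto_atTop_zero_of_forall_le_add fun δ hδ => ?_
  obtain ⟨K, -, hK⟩ := ha δ hδ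
  obtain ⟨s, hs⟩ := exists_finset_forall_mem_Icc_exists_mem_Icc (-K - 2 * (ε / 2)) K
    (half_pos hε)
  refine ⟨fun n => μ (⋃ y ∈ s, E y n), ?_, fun n => ?_⟩
  · exact tendsto_measure_biUnion_finset_of_tendsto_zero fun y _ =>
      tendsto_measure_union_of_tendsto_zero (hb y _ (half_pos hε)).1 (hb y _ (half_pos hε)).2
  · have hcover : {ω | ε < |V n ω - W n ω|} ⊆ {ω | K < |W n ω|} ∪ ⋃ y ∈ s, E y n := by
      intro ω hω
      refine (lt_or_ge K |W n ω|).imp id fun hW => ?_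
      obtain ⟨y, hy, hyω⟩ := exists_separating_mem_of_two_mul_lt_abs_sub (half_pos hε).le hs hW
        (by rwa [mul_div_cancel₀ _ two_ne_zero])
      exact mem_biUnion hy hyω
    exact (measure_mono hcover).trans ((measure_union_le _ _).trans (by gcongr; exact (hK n).le))

/-- Ghosh's lemma: if (a) W_n is uniformly tight in the sense that for all δ > 0
there is ε with P(|W_n| > ε) < δ for all n, and (b) for all y and ε > 0,
P(V_n ≤ y, W_n ≥ y + ε) → 0 and P(V_n ≥ y + ε, W_n ≤ y) → 0, then
V_n − W_n → 0 in probability. -/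
theorem ghosh_lemma
    {Ω : Type*} [MeasurableSpace Ω] (μ : Measure Ω) [IsProbabilityMeasure μ]
    (V W : ℕ → Ω → ℝ)
    (ha : ∀ δ : ℝ, 0 < δ → ∃ ε : ℝ, 0 < ε ∧ ∀ n : ℕ,
        μ {ω | ε < |W n ω|} < ENNReal.ofReal δ)
    (hb : ∀ y : ℝ, ∀ ε : ℝ, 0 < ε →
        Tendsto (fun n => μ {ω | V n ω ≤ y ∧ y + ε ≤ W n ω}) atTop (nhds 0) ∧
        Tendsto (fun n => μ {ω | y + ε ≤ V n ω ∧ W n ω ≤ y}) atTop (nhds 0)) :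
    ∀ ε : ℝ, 0 < ε →
      Tendsto (fun n => μ {ω | ε < |V n ω - W n ω|}) atTop (nhds 0) :=
  ghosh_lemma_general μ V W ha hb
end
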